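/- arXiv:math/0012115 — 2 statements merged into one kernel-verified Lean document; each statement's English description precedes it below -/
import Mathlib

section
/- If a group G admits a sequence h₁, h₂, … of quasi-homomorphisms G → ℝ and a sequence of elements f₁, f₂, … ∈ G such that each hᵢ is unbounded on the cyclic subgroup generated by fᵢ but bounded on the cyclic subgroup generated by fⱼ for every j < i, then the classes [h₁], [h₂], … are linearly independent in the quotient of the space of quasi-homomorphisms of G by the bounded functions; in particular that quotient is infinite dimensional. -/
/-- A quasi-homomorphism: a function `h : G → ℝ` with finite defect. -/
def IsQuasiHom {G : Type*} [Group G] (h : G → ℝ) : Prop :=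
  ∃ D : ℝ, ∀ a b : G, |h (a * b) - h a - h b| ≤ D

/-!
Bounded functions form a vector space (here: `Memℓp · ∞`). Evaluate a bounded combination
`∑ tᵢ hᵢ` along the powers of `fⱼ`, where `j` is the least index with `tⱼ ≠ 0`: every other
`hᵢ` occurring has `i > j`, hence is bounded there, so `tⱼ hⱼ` is bounded on `⟨fⱼ⟩`,
contradicting the choice of `fⱼ`.
-/

open scoped ENNReal

theorem memℓp_infty_iff_exists_abs_le {α : Type*} {φ : α → ℝ} :
    Memℓp φ ∞ ↔ ∃ C : ℝ, ∀ x, |φ x| ≤ C := by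
  simp only [memℓp_infty_iff, bddAbove_def, Set.forall_mem_range, Real.norm_eq_abs]

namespace Memℓp

variable {α ι : Type*} {E : α → Type*} [∀ a, NormedAddCommGroup (E a)] {p : ℝ≥0∞}

theorem of_sum_of_forall_ne [DecidableEq ι] {s : Finset ι} {u : ι → (a : α) → E a} {j : ι}
    (hj : j ∈ s) (hsum : Memℓp (fun a ↦ ∑ i ∈ s, u i a) p)
    (hu : ∀ i ∈ s, i ≠ j → Memℓp (u i) p) : Memℓp (u j) p := by
  have hrest : Memℓp (fun a ↦ ∑ i ∈ s.erase j, u i a) p :=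
    finsetSum _ fun i hi ↦ hu i (Finset.mem_of_mem_erase hi) (Finset.ne_of_mem_erase hi)
  convert hsum.sub hrest using 1
  funext a
  rw [Pi.sub_apply, ← Finset.add_sum_erase s (u · a) hj, add_sub_cancel_right]

theorem of_const_mul {𝕜 : Type*} [NormedDivisionRing 𝕜] {f : α → 𝕜} {c : 𝕜} (hc : c ≠ 0)
    (hf : Memℓp (fun x ↦ c * f x) p) : Memℓp f p := by
  simpa [inv_mul_cancel_left₀ hc] using hf.const_mul c⁻¹

end Memℓp

theorem linearly_independent_quasiHoms_general {G : Type*} [Group G]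
    (h : ℕ → G → ℝ) (f : ℕ → G)
    (hunb : ∀ i, ¬ ∃ C : ℝ, ∀ n : ℤ, |h i (f i ^ n)| ≤ C)
    (hbdd : ∀ i j, j < i → ∃ C : ℝ, ∀ n : ℤ, |h i (f j ^ n)| ≤ C) :
    ∀ t : ℕ →₀ ℝ,
      (∃ C : ℝ, ∀ g : G, |∑ i ∈ t.support, t i * h i g| ≤ C) → t = 0 := by
  rintro t ⟨C, hC⟩
  by_contra ht
  have hne : t.support.Nonempty := Finsupp.support_nonempty_iff.mpr ht
  set j := t.support.min' hne
  have hj : j ∈ t.support := t.support.min'_mem hne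
  let u : ℕ → ℤ → ℝ := fun i n ↦ t i * h i (f j ^ n)
  have hsum : Memℓp (fun n ↦ ∑ i ∈ t.support, u i n) ∞ :=
    memℓp_infty_iff_exists_abs_le.mpr ⟨C, fun n ↦ hC (f j ^ n)⟩
  have hlater : ∀ i ∈ t.support, i ≠ j → Memℓp (u i) ∞ := fun i hi hij ↦
    (memℓp_infty_iff_exists_abs_le.mpr
      (hbdd i j ((t.support.min'_le i hi).lt_of_ne' hij))).const_mul (t i)
  exact hunb j <| memℓp_infty_iff_exists_abs_le.mp <|
    (hsum.of_sum_of_forall_ne hj hlater).of_const_mul (Finsupp.mem_support_iff.mp hj)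

/-- If `hᵢ` are quasi-homomorphisms and `fᵢ ∈ G` are such that each `hᵢ` is unbounded
on `⟨fᵢ⟩` but bounded on `⟨fⱼ⟩` for `j < i`, then the classes `[hᵢ]` are linearly
independent modulo bounded functions: any finite linear combination which is a
bounded function must have all coefficients zero.  In particular the quotient
`QH(G)` of the quasi-homomorphisms by the bounded functions is infinite dimensional. -/
theorem linearly_independent_quasiHoms {G : Type*} [Group G]
    (h : ℕ → G → ℝ) (f : ℕ → G)
    (hq : ∀ i, IsQuasiHom (h i))
    (hunb : ∀ i, ¬ ∃ C : ℝ, ∀ n : ℤ, |h i (f i ^ n)| ≤ C)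
    (hbdd : ∀ i j, j < i → ∃ C : ℝ, ∀ n : ℤ, |h i (f j ^ n)| ≤ C) :
    ∀ t : ℕ →₀ ℝ,
      (∃ C : ℝ, ∀ g : G, |∑ i ∈ t.support, t i * h i g| ≤ C) → t = 0 :=
  linearly_independent_quasiHoms_general h f hunb hbdd
end

section
/- In a δ-hyperbolic geodesic metric space, if γ is a path from x to y realizing the infimum of |α| - W·|α|_w over all paths α from x to y (where 0 < W < |w|), then γ is a (|w|/(|w|-W), 2W|w|/(|w|-W))-quasi-geodesic. -/
/-- The Gromov product `(x|y)_w`. -/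
noncomputable def gromovProd {X : Type*} [MetricSpace X] (w x y : X) : ℝ :=
  (dist w x + dist w y - dist x y) / 2

/-- `X` is `δ`-hyperbolic (four-point condition). -/
def IsDeltaHyperbolic (X : Type*) [MetricSpace X] (δ : ℝ) : Prop :=
  ∀ w x y z : X, min (gromovProd w x y) (gromovProd w y z) - δ ≤ gromovProd w x z

/-- `α` (restricted to `{0, …, n}`) is an edge path: consecutive points at distance 1. -/
def IsEdgePath {X : Type*} [MetricSpace X] (α : ℕ → X) (n : ℕ) : Prop :=
  ∀ i < n, dist (α i) (α (i + 1)) = 1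

/-- There is a copy of the path `w` (of length `m`) in `α` starting at position `i`:
the subpath `α(i), …, α(i+m)` is isometric to `w(0), …, w(m)`. -/
def CopyAt {X : Type*} [MetricSpace X] (w : ℕ → X) (m : ℕ) (α : ℕ → X) (i : ℕ) : Prop :=
  ∀ j ≤ m, ∀ k ≤ m, dist (α (i + j)) (α (i + k)) = dist (w j) (w k)

/-- `α` (of length `n`) contains `c` non-overlapping copies of `w` (of length `m`). -/
def HasCopies {X : Type*} [MetricSpace X] (w : ℕ → X) (m : ℕ) (α : ℕ → X) (n : ℕ)
    (c : ℕ) : Prop :=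
  ∃ p : Fin c → ℕ, (∀ a : Fin c, p a + m ≤ n ∧ CopyAt w m α (p a)) ∧
    ∀ a b : Fin c, a < b → p a + m ≤ p b

/-- `|α|_w`: the maximal number of non-overlapping copies of `w` in `α`. -/
noncomputable def numCopies {X : Type*} [MetricSpace X] (w : ℕ → X) (m : ℕ)
    (α : ℕ → X) (n : ℕ) : ℕ :=
  sSup {c : ℕ | HasCopies w m α n c}

/-- The quantity `|α| - W·|α|_w`. -/
noncomputable def pathCost {X : Type*} [MetricSpace X] (w : ℕ → X) (m : ℕ) (W : ℕ)
    (α : ℕ → X) (n : ℕ) : ℝ :=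
  (n : ℝ) - (W : ℝ) * (numCopies w m α n : ℝ)

/-! Replace the stretch `γ(i), …, γ(j)` of a minimizing path by a geodesic of length
`d = d(γ i, γ j)`. Every copy of `w` in `γ` that avoids the window `(i, j)` survives in the new
path, and since copies are `m` apart, at most `(j - i)/m + 2` copies meet the window. Minimality
of `γ` then gives `(j - i) - d ≤ W((j - i)/m + 2)`, which is the lower quasi-geodesic bound; the
upper bound holds for every edge path. -/

section EdgePaths

variable {X : Type*} [MetricSpace X] {γ : ℕ → X} {n : ℕ}

def pathAppend {Y : Type*} (γ₁ γ₂ : ℕ → Y) (a : ℕ) : ℕ → Y :=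
  fun t => if t ≤ a then γ₁ t else γ₂ (t - a)

lemma pathAppend_of_le {Y : Type*} {γ₁ γ₂ : ℕ → Y} {a t : ℕ} (h : t ≤ a) :
    pathAppend γ₁ γ₂ a t = γ₁ t :=
  if_pos h

lemma pathAppend_add {Y : Type*} {γ₁ γ₂ : ℕ → Y} {a : ℕ} (h : γ₁ a = γ₂ 0) (t : ℕ) :
    pathAppend γ₁ γ₂ a (a + t) = γ₂ t := by
  unfold pathAppend
  split_ifs with ht
  · obtain rfl : t = 0 := by omega
    simpa using h
  · congr 1
    omega

namespace IsEdgePath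

lemma mono (hγ : IsEdgePath γ n) {l : ℕ} (hl : l ≤ n) : IsEdgePath γ l :=
  fun t ht => hγ t (by omega)

lemma shift (hγ : IsEdgePath γ n) (j : ℕ) : IsEdgePath (fun t => γ (j + t)) (n - j) :=
  fun t ht => by simpa only [add_assoc] using hγ (j + t) (by omega)

lemma append {γ₁ γ₂ : ℕ → X} {a b : ℕ} (h₁ : IsEdgePath γ₁ a) (h₂ : IsEdgePath γ₂ b)
    (h : γ₁ a = γ₂ 0) : IsEdgePath (pathAppend γ₁ γ₂ a) (a + b) := by
  intro t ht
  rcases lt_or_ge t a with hta | hta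
  · rw [pathAppend_of_le hta.le, pathAppend_of_le hta]
    exact h₁ t hta
  · obtain ⟨s, rfl⟩ := Nat.exists_eq_add_of_le hta
    rw [pathAppend_add h, add_assoc, pathAppend_add h]
    exact h₂ s (by omega)

lemma exists_splice (hγ : IsEdgePath γ n) {i j k : ℕ} (hij : i ≤ j) (hjn : j ≤ n)
    {β : ℕ → X} (hβ : IsEdgePath β k) (hβ0 : β 0 = γ i) (hβk : β k = γ j) :
    ∃ α : ℕ → X, IsEdgePath α (i + k + (n - j)) ∧ (∀ t ≤ i, α t = γ t) ∧
      ∀ t, α (i + k + t) = γ (j + t) := by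
  have hjoin : pathAppend γ β i (i + k) = γ (j + 0) := by
    rw [pathAppend_add hβ0.symm, hβk, add_zero]
  refine ⟨pathAppend (pathAppend γ β i) (fun t => γ (j + t)) (i + k),
    ((hγ.mono (hij.trans hjn)).append hβ hβ0.symm).append (hγ.shift j) hjoin,
    fun t ht => ?_, pathAppend_add hjoin⟩
  rw [pathAppend_of_le (by omega), pathAppend_of_le ht]

lemma dist_le (hγ : IsEdgePath γ n) {i j : ℕ} (hij : i ≤ j) (hjn : j ≤ n) :
    dist (γ i) (γ j) ≤ (j : ℝ) - i := by
  induction j, hij using Nat.le_induction with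
  | base => simp
  | succ j hij ih =>
    calc dist (γ i) (γ (j + 1)) ≤ dist (γ i) (γ j) + dist (γ j) (γ (j + 1)) :=
          dist_triangle _ _ _
      _ ≤ ((j : ℝ) - i) + 1 := add_le_add (ih (by omega)) (hγ j (by omega)).le
      _ = ((j + 1 : ℕ) : ℝ) - i := by push_cast; ring

lemma dist_le_abs (hγ : IsEdgePath γ n) {i j : ℕ} (hi : i ≤ n) (hj : j ≤ n) :
    dist (γ i) (γ j) ≤ |(i : ℝ) - j| := by
  rcases le_total i j with h | h
  · rw [abs_sub_comm]
    exact (hγ.dist_le h hj).trans (le_abs_self _)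
  · rw [dist_comm]
    exact (hγ.dist_le h hi).trans (le_abs_self _)

end IsEdgePath

end EdgePaths

section Copies

variable {X : Type*} [MetricSpace X] {w : ℕ → X} {m : ℕ}

lemma CopyAt.of_shift {γ α : ℕ → X} {r s : ℕ} (h : CopyAt w m γ r)
    (hαγ : ∀ t ≤ m, α (s + t) = γ (r + t)) : CopyAt w m α s := by
  intro j hj k hk
  rw [hαγ j hj, hαγ k hk]
  exact h j hj k hk

lemma add_mul_le_of_separated {c : ℕ} {p : Fin c → ℕ} (hp : ∀ a b, a < b → p a + m ≤ p b)
    {a b : Fin c} (hab : a ≤ b) : p a + m * ((b : ℕ) - a) ≤ p b := by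
  obtain ⟨d, hd⟩ := Nat.exists_eq_add_of_le (Fin.le_def.mp hab)
  induction d generalizing b with
  | zero => simp [Fin.ext (hd.trans (add_zero _))]
  | succ d ih =>
    let b' : Fin c := ⟨a + d, by omega⟩
    have hb' : p a + m * ((b' : ℕ) - a) ≤ p b' := ih (Fin.le_def.mpr (by simp [b'])) rfl
    have hsep : p b' + m ≤ p b := hp b' b (Fin.lt_def.mpr (by simp [b']; omega))
    have hdist : m * ((b : ℕ) - a) = m * ((b' : ℕ) - a) + m := by
      simp only [b', hd, Nat.add_sub_cancel_left]; ring
    omega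

lemma HasCopies.mul_le {α : ℕ → X} {n c : ℕ} (h : HasCopies w m α n c) : m * c ≤ n := by
  obtain ⟨p, hpn, hp⟩ := h
  rcases c with _ | c
  · simp
  · have hspan := add_mul_le_of_separated hp (Fin.zero_le (Fin.last c))
    have hlast := (hpn (Fin.last c)).1
    simp only [Fin.val_last, Fin.val_zero, Nat.sub_zero] at hspan
    rw [Nat.mul_succ]
    omega

lemma bddAbove_setOf_hasCopies (hm : 0 < m) (α : ℕ → X) (n : ℕ) :
    BddAbove {c | HasCopies w m α n c} :=
  ⟨n, fun c hc => (Nat.le_mul_of_pos_left c hm).trans hc.mul_le⟩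

lemma HasCopies.le_numCopies (hm : 0 < m) {α : ℕ → X} {n c : ℕ}
    (h : HasCopies w m α n c) : c ≤ numCopies w m α n :=
  le_csSup (bddAbove_setOf_hasCopies hm α n) h

lemma hasCopies_numCopies (hm : 0 < m) (α : ℕ → X) (n : ℕ) :
    HasCopies w m α n (numCopies w m α n) :=
  Nat.sSup_mem ⟨0, (⟨fun _ => 0, fun a => a.elim0, fun a _ _ => a.elim0⟩ : HasCopies w m α n 0)⟩
    (bddAbove_setOf_hasCopies hm α n)

lemma hasCopies_card {c n : ℕ} {α : ℕ → X} (A : Finset (Fin c)) (q : Fin c → ℕ)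
    (hq : ∀ a ∈ A, q a + m ≤ n ∧ CopyAt w m α (q a))
    (hsep : ∀ a ∈ A, ∀ b ∈ A, a < b → q a + m ≤ q b) : HasCopies w m α n A.card :=
  ⟨fun a => q (A.orderEmbOfFin rfl a), fun a => hq _ (A.orderEmbOfFin_mem rfl a),
    fun a b hab => hsep _ (A.orderEmbOfFin_mem rfl a) _ (A.orderEmbOfFin_mem rfl b)
      ((A.orderEmbOfFin rfl).strictMono hab)⟩

lemma card_filter_meets_window_le {c : ℕ} {p : Fin c → ℕ} (hp : ∀ a b, a < b → p a + m ≤ p b)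
    {i j : ℕ} (hij : i ≤ j) :
    m * (Finset.univ.filter fun a => i < p a + m ∧ p a < j).card + i ≤ j + 2 * m := by
  set B := Finset.univ.filter fun a => i < p a + m ∧ p a < j
  rcases B.eq_empty_or_nonempty with hB | hB
  · rw [hB, Finset.card_empty]
    omega
  · have hfirst : i < p (B.min' hB) + m := (Finset.mem_filter.mp (B.min'_mem hB)).2.1
    have hlast : p (B.max' hB) < j := (Finset.mem_filter.mp (B.max'_mem hB)).2.2
    have hle : B.min' hB ≤ B.max' hB := B.min'_le _ (B.max'_mem hB)
    have hspan := add_mul_le_of_separated hp hle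
    have hcard : B.card ≤ (B.max' hB : ℕ) - B.min' hB + 1 := by
      calc B.card ≤ (Finset.Icc (B.min' hB) (B.max' hB)).card :=
            Finset.card_le_card fun a ha => Finset.mem_Icc.mpr ⟨B.min'_le a ha, B.le_max' a ha⟩
        _ = _ := by rw [Fin.card_Icc, Nat.sub_add_comm (Fin.le_def.mp hle)]
    have := Nat.mul_le_mul_left m hcard
    rw [Nat.mul_succ] at this
    omega

lemma mul_numCopies_le_of_eq_outside (hm : 0 < m) {γ α : ℕ → X} {n i j l : ℕ}
    (hij : i ≤ j) (hjn : j ≤ n) (hil : i ≤ l)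
    (hleft : ∀ t ≤ i, α t = γ t) (hright : ∀ t, α (l + t) = γ (j + t)) :
    m * numCopies w m γ n ≤ m * numCopies w m α (l + (n - j)) + (j - i) + 2 * m := by
  obtain ⟨p, hpn, hp⟩ := hasCopies_numCopies (w := w) hm γ n
  set B := Finset.univ.filter fun a => i < p a + m ∧ p a < j
  have hB : m * B.card + i ≤ j + 2 * m := card_filter_meets_window_le hp hij
  have hsplit : ∀ a ∈ Bᶜ, p a + m ≤ i ∨ j ≤ p a := by
    intro a ha
    simp only [B, Finset.mem_compl, Finset.mem_filter, Finset.mem_univ, true_and] at ha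
    omega
  have hsurvive : HasCopies w m α (l + (n - j)) Bᶜ.card := by
    refine hasCopies_card Bᶜ (fun a => if p a + m ≤ i then p a else l + (p a - j)) ?_ ?_
    · intro a ha
      have hcopy := (hpn a).2
      split_ifs with h
      · exact ⟨by omega, hcopy.of_shift fun t ht => hleft _ (by omega)⟩
      · have hja : j ≤ p a := (hsplit a ha).resolve_left h
        refine ⟨by have := (hpn a).1; omega, hcopy.of_shift fun t _ => ?_⟩
        rw [add_assoc, hright]
        congr 1
        omega
    · intro a ha b hb hab
      have := hp a b hab
      have := hsplit a ha
      have := hsplit b hb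
      split_ifs <;> omega
  have hcount : Bᶜ.card + B.card = numCopies w m γ n := by
    rw [Finset.card_compl_add_card, Fintype.card_fin]
  have := Nat.mul_le_mul_left m (hsurvive.le_numCopies hm)
  rw [← hcount, Nat.mul_add]
  omega

end Copies

lemma le_dist_of_pathCost_minimal {X : Type*} [MetricSpace X]
    (hgeo : ∀ x y : X, ∃ (α : ℕ → X) (n : ℕ),
      α 0 = x ∧ α n = y ∧ IsEdgePath α n ∧ (n : ℝ) = dist x y)
    {w : ℕ → X} {m W : ℕ} (hm : 0 < m) {x y : X} {γ : ℕ → X} {n : ℕ}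
    (hγ0 : γ 0 = x) (hγn : γ n = y) (hγ : IsEdgePath γ n)
    (hmin : ∀ (α : ℕ → X) (k : ℕ), α 0 = x → α k = y → IsEdgePath α k →
      pathCost w m W γ n ≤ pathCost w m W α k)
    {i j : ℕ} (hij : i ≤ j) (hjn : j ≤ n) :
    ((m : ℝ) - W) / m * ((j : ℝ) - i) - 2 * W ≤ dist (γ i) (γ j) := by
  obtain ⟨β, k, hβ0, hβk, hβ, hk⟩ := hgeo (γ i) (γ j)
  obtain ⟨α, hα, hleft, hright⟩ := hγ.exists_splice hij hjn hβ hβ0 hβk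
  have hcopies := mul_numCopies_le_of_eq_outside (w := w) hm hij hjn (Nat.le_add_right i k)
    hleft hright
  have hcost := hmin α _ (by rw [hleft 0 (Nat.zero_le i), hγ0])
    (by rw [hright, Nat.add_sub_cancel' hjn, hγn]) hα
  unfold pathCost at hcost
  set c := numCopies w m γ n
  set c' := numCopies w m α (i + k + (n - j))
  have hcopies_real : (m : ℝ) * c ≤ m * c' + ((j : ℝ) - i) + 2 * m := by
    have : ((m * c : ℕ) : ℝ) ≤ ((m * c' + (j - i) + 2 * m : ℕ) : ℝ) := by exact_mod_cast hcopies
    push_cast [Nat.cast_sub hij] at this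
    exact this
  have hsaving : (j : ℝ) - i - k ≤ W * (c - c') := by
    push_cast [Nat.cast_sub hjn] at hcost
    linarith
  have hm' : (0 : ℝ) < m := by exact_mod_cast hm
  rw [← hk, div_mul_eq_mul_div, sub_le_iff_le_add, div_le_iff₀ hm']
  calc ((m : ℝ) - W) * (j - i) = m * ((j : ℝ) - i - k) - W * (j - i) + m * k := by ring
    _ ≤ W * (m * c - m * c') - W * (j - i) + m * k := by
      nlinarith [mul_le_mul_of_nonneg_left hsaving hm'.le]
    _ ≤ (k + 2 * W) * m := by
      nlinarith [mul_le_mul_of_nonneg_left hcopies_real (Nat.cast_nonneg (α := ℝ) W)]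

theorem minimizing_path_is_quasigeodesic_general {X : Type*} [MetricSpace X]
    (hgeo : ∀ x y : X, ∃ (α : ℕ → X) (n : ℕ),
      α 0 = x ∧ α n = y ∧ IsEdgePath α n ∧ (n : ℝ) = dist x y)
    (w : ℕ → X) (m : ℕ)
    (W : ℕ) (hW2 : W < m)
    (x y : X) (γ : ℕ → X) (n : ℕ)
    (hγ0 : γ 0 = x) (hγn : γ n = y) (hγ : IsEdgePath γ n)
    (hmin : ∀ (α : ℕ → X) (k : ℕ), α 0 = x → α k = y → IsEdgePath α k →
      pathCost w m W γ n ≤ pathCost w m W α k) :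
    ∀ i ≤ n, ∀ j ≤ n,
      ((m : ℝ) - W) / m * |(i : ℝ) - j| - 2 * W * m / ((m : ℝ) - W)
          ≤ dist (γ i) (γ j) ∧
        dist (γ i) (γ j) ≤ (m : ℝ) / ((m : ℝ) - W) * |(i : ℝ) - j|
          + 2 * W * m / ((m : ℝ) - W) := by
  intro i hi j hj
  have hm : 0 < m := by omega
  have lower : ((m : ℝ) - W) / m * |(i : ℝ) - j| - 2 * W ≤ dist (γ i) (γ j) := by
    rcases le_total i j with h | h
    · rw [abs_sub_comm, abs_of_nonneg (by simpa using h)]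
      exact le_dist_of_pathCost_minimal hgeo hm hγ0 hγn hγ hmin h hj
    · rw [abs_of_nonneg (by simpa using h), dist_comm]
      exact le_dist_of_pathCost_minimal hgeo hm hγ0 hγn hγ hmin h hi
  have upper := hγ.dist_le_abs hi hj
  have hmW : (0 : ℝ) < m - W := sub_pos.mpr (by exact_mod_cast hW2)
  have hconst : 2 * (W : ℝ) ≤ 2 * W * m / (m - W) := by
    rw [le_div_iff₀ hmW]
    nlinarith [Nat.cast_nonneg (α := ℝ) W]
  have hslope : 1 ≤ (m : ℝ) / (m - W) := by
    rw [le_div_iff₀ hmW]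
    linarith [Nat.cast_nonneg (α := ℝ) W]
  constructor
  · linarith
  · nlinarith [abs_nonneg ((i : ℝ) - j)]

/-- Lemma (Fujiwara): in a `δ`-hyperbolic graph (a geodesic metric space whose
geodesics are edge paths), if the path `γ` from `x` to `y` realizes the infimum of
`|α| - W|α|_w` over all paths `α` from `x` to `y`, where `0 < W < |w| = m`, then `γ`
is a `(m/(m-W), 2Wm/(m-W))`-quasi-geodesic. -/
theorem minimizing_path_is_quasigeodesic {X : Type*} [MetricSpace X]
    (δ : ℝ) (hδ : 0 ≤ δ) (hX : IsDeltaHyperbolic X δ)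
    (hgeo : ∀ x y : X, ∃ (α : ℕ → X) (n : ℕ),
      α 0 = x ∧ α n = y ∧ IsEdgePath α n ∧ (n : ℝ) = dist x y)
    (w : ℕ → X) (m : ℕ) (hw : IsEdgePath w m)
    (W : ℕ) (hW1 : 0 < W) (hW2 : W < m)
    (x y : X) (γ : ℕ → X) (n : ℕ)
    (hγ0 : γ 0 = x) (hγn : γ n = y) (hγ : IsEdgePath γ n)
    (hmin : ∀ (α : ℕ → X) (k : ℕ), α 0 = x → α k = y → IsEdgePath α k →
      pathCost w m W γ n ≤ pathCost w m W α k) :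
    ∀ i ≤ n, ∀ j ≤ n,
      ((m : ℝ) - W) / m * |(i : ℝ) - j| - 2 * W * m / ((m : ℝ) - W)
          ≤ dist (γ i) (γ j) ∧
        dist (γ i) (γ j) ≤ (m : ℝ) / ((m : ℝ) - W) * |(i : ℝ) - j|
          + 2 * W * m / ((m : ℝ) - W) :=
  minimizing_path_is_quasigeodesic_general hgeo w m W hW2 x y γ n hγ0 hγn hγ hmin
end
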